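/- arXiv:0707.4558 — 6 statements merged into one kernel-verified Lean document; each statement's English description precedes it below -/
import Mathlib

section
/- If a positive definite symmetric real 3×3 matrix Σ = (σ_ij) satisfies σ_12·σ_33 − σ_13·σ_23 = 0 and σ_13·σ_22 − σ_12·σ_23 = 0, then σ_12 = 0 and σ_13 = 0. -/
/-! The two hypotheses form a homogeneous linear system in `(σ₁₂, σ₁₃)` whose matrix is the
adjugate of the principal submatrix of `Σ` on `{2, 3}`; positive definiteness makes its
determinant `σ₂₂σ₃₃ - σ₂₃²` positive, so the only solution is zero. -/

open scoped ComplexOrder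

theorem eq_zero_and_eq_zero_of_mul_sub_mul_ne_zero {R : Type*} [CommRing R] [NoZeroDivisors R]
    {a b c d x y : R} (hdet : a * d - b * c ≠ 0)
    (h₁ : a * x + b * y = 0) (h₂ : c * x + d * y = 0) : x = 0 ∧ y = 0 := by
  have hx : (a * d - b * c) * x = 0 := by linear_combination d * h₁ - b * h₂
  have hy : (a * d - b * c) * y = 0 := by linear_combination a * h₂ - c * h₁
  exact ⟨(mul_eq_zero.mp hx).resolve_left hdet, (mul_eq_zero.mp hy).resolve_left hdet⟩

theorem Matrix.PosDef.two_by_two_minor_pos {n 𝕜 : Type*} [RCLike 𝕜] {A : Matrix n n 𝕜}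
    (hA : A.PosDef) {i j : n} (hij : i ≠ j) :
    0 < A i i * A j j - A i j * A j i := by
  classical
  have hinj : Function.Injective ![i, j] := by
    intro a b
    fin_cases a <;> fin_cases b <;> simp [hij, hij.symm]
  have := (hA.submatrix hinj).det_pos
  rwa [Matrix.det_fin_two] at this

theorem gaussoid_axiom_b (S : Matrix (Fin 3) (Fin 3) ℝ)
    (hsymm : S.IsSymm) (hpd : S.PosDef)
    (h1 : S 0 1 * S 2 2 - S 0 2 * S 1 2 = 0)
    (h2 : S 0 2 * S 1 1 - S 0 1 * S 1 2 = 0) :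
    S 0 1 = 0 ∧ S 0 2 = 0 := by
  have hminor : 0 < S 1 1 * S 2 2 - S 1 2 * S 2 1 := hpd.two_by_two_minor_pos (by decide)
  rw [hsymm.apply 1 2] at hminor
  exact eq_zero_and_eq_zero_of_mul_sub_mul_ne_zero (a := S 2 2) (b := -S 1 2) (c := -S 1 2)
    (d := S 1 1) (by linarith) (by linear_combination h1) (by linear_combination h2)
end

section
/- Let Σ = (σ_ij) be a positive definite symmetric real 5×5 matrix satisfying the five equations σ_12·σ_33 − σ_13·σ_23 = 0, σ_23·σ_44 − σ_24·σ_34 = 0, σ_34·σ_55 − σ_35·σ_45 = 0, σ_45·σ_11 − σ_14·σ_15 = 0, and σ_15·σ_22 − σ_25·σ_12 = 0. Then σ_12 = σ_23 = σ_34 = σ_45 = σ_15 = 0. -/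
/-!
If none of the five cycle entries `σ_{k,k+1}` vanishes, multiplying the five equations
`σ_{k,k+1} σ_{k+2,k+2} = σ_{k,k+2} σ_{k+1,k+2}` and cancelling the cycle entries gives
`∏ σ_kk = ∏ σ_{k,k+2}`, whereas the strict `2 × 2` minor inequalities
`σ_{k,k+2}² < σ_kk σ_{k+2,k+2}` multiply to `(∏ σ_{k,k+2})² < (∏ σ_kk)²`.
So some cycle entry vanishes, and each equation passes a zero from `σ_{k+1,k+2}` back to
`σ_{k,k+1}`, hence around the whole cycle.
-/

open Finset

theorem Fintype.prod_comp_add_right {G M : Type*} [AddGroup G] [Fintype G] [CommMonoid M]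
    (f : G → M) (c : G) : ∏ x, f (x + c) = ∏ x, f x :=
  Fintype.prod_equiv (Equiv.addRight c) _ _ fun _ => rfl

theorem Fin.add_two_ne_self {n : ℕ} [NeZero n] (hn : 3 ≤ n) (k : Fin n) : k + 2 ≠ k := by
  intro h
  have h2 : (2 : Fin n) = 0 := by simpa using h
  rw [Fin.ext_iff, Fin.coe_ofNat_eq_mod, Nat.mod_eq_of_lt (by omega)] at h2
  exact two_ne_zero h2

theorem Matrix.PosDef.sq_apply_lt_mul_apply {ι : Type*} [Fintype ι] [DecidableEq ι]
    {S : Matrix ι ι ℝ} (hS : S.PosDef) {i j : ι} (hij : i ≠ j) :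
    S i j ^ 2 < S i i * S j j := by
  have hdet := (hS.submatrix (e := ![i, j])
    (by simp [Function.Injective, Fin.forall_fin_two, hij, hij.symm])).det_pos
  have hji : S j i = S i j := hS.isHermitian.apply i j
  rw [Matrix.det_fin_two] at hdet
  simp only [Matrix.submatrix_apply, Matrix.cons_val_zero, Matrix.cons_val_one, hji] at hdet
  linarith [sq (S i j)]

section Cyclic

variable {R : Type*} [CommRing R] [LinearOrder R] [IsStrictOrderedRing R] {n : ℕ} [NeZero n]
  {a b d : Fin n → R}

open Fin.NatCast in
theorem Fin.ne_zero_of_cyclic_mul_eq_mul (hd : ∀ k, 0 < d k)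
    (h : ∀ k, a k * d (k + 2) = b k * a (k + 1)) {k : Fin n} (hk : a k ≠ 0) (j : Fin n) :
    a j ≠ 0 := by
  have hsucc : ∀ j, a j ≠ 0 → a (j + 1) ≠ 0 := fun j hj hj1 => by
    have := h j
    rw [hj1, mul_zero, mul_eq_zero] at this
    exact this.elim hj (hd _).ne'
  have hshift : ∀ m : ℕ, a (k + (m : Fin n)) ≠ 0 := by
    intro m
    induction m with
    | zero => simpa using hk
    | succ m ih => simpa [add_assoc] using hsucc _ ih
  simpa using hshift (j - k).val

theorem Fin.eq_zero_of_cyclic_mul_eq_mul (hd : ∀ k, 0 < d k) (hb : ∀ k, b k ^ 2 < d k * d (k + 2))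
    (h : ∀ k, a k * d (k + 2) = b k * a (k + 1)) (k : Fin n) : a k = 0 := by
  by_contra hk
  have ha := Fin.ne_zero_of_cyclic_mul_eq_mul hd h hk
  have hb0 : ∀ j, b j ≠ 0 := fun j hj => by
    have := h j
    rw [hj, zero_mul, mul_eq_zero] at this
    exact this.elim (ha j) (hd _).ne'
  have hprod : ∏ j, d j = ∏ j, b j := by
    have := prod_congr rfl fun j (_ : j ∈ univ) => h j
    rw [prod_mul_distrib, prod_mul_distrib, Fintype.prod_comp_add_right d,
      Fintype.prod_comp_add_right a, mul_comm] at this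
    exact mul_right_cancel₀ (prod_ne_zero_iff.mpr fun j _ => ha j) this
  have hlt : (∏ j, b j) ^ 2 < (∏ j, d j) ^ 2 :=
    calc (∏ j, b j) ^ 2 = ∏ j, b j ^ 2 := (prod_pow _ _ _).symm
      _ < ∏ j, d j * d (j + 2) :=
        prod_lt_prod_of_nonempty (fun j _ => pow_two_pos_of_ne_zero (hb0 j)) (fun j _ => hb j)
          univ_nonempty
      _ = (∏ j, d j) ^ 2 := by rw [prod_mul_distrib, Fintype.prod_comp_add_right d, sq]
  exact hlt.ne (by rw [hprod])

end Cyclic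

/-- For a Gaussian with covariance `S`, `i ⊥ j | k` is the vanishing of this almost-principal
`2 × 2` minor. -/
def Matrix.IsCondIndep {ι : Type*} (S : Matrix ι ι ℝ) (i j k : ι) : Prop :=
  S i j * S k k = S i k * S j k

theorem Matrix.PosDef.apply_add_one_eq_zero_of_isCondIndep {n : ℕ} [NeZero n] (hn : 3 ≤ n)
    {S : Matrix (Fin n) (Fin n) ℝ} (hS : S.PosDef)
    (hci : ∀ k, S.IsCondIndep k (k + 1) (k + 2)) (k : Fin n) : S k (k + 1) = 0 :=
  Fin.eq_zero_of_cyclic_mul_eq_mul (a := fun k => S k (k + 1)) (b := fun k => S k (k + 2))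
    (fun _ => hS.diag_pos)
    (fun k => hS.sq_apply_lt_mul_apply (Fin.add_two_ne_self hn k).symm)
    (fun k => by rw [show k + 1 + 1 = k + 2 by grind]; exact hci k) k

theorem gci_pentagon (S : Matrix (Fin 5) (Fin 5) ℝ)
    (hsymm : S.IsSymm) (hpd : S.PosDef)
    (h12 : S 0 1 * S 2 2 - S 0 2 * S 1 2 = 0)
    (h23 : S 1 2 * S 3 3 - S 1 3 * S 2 3 = 0)
    (h34 : S 2 3 * S 4 4 - S 2 4 * S 3 4 = 0)
    (h45 : S 3 4 * S 0 0 - S 0 3 * S 0 4 = 0)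
    (h51 : S 0 4 * S 1 1 - S 1 4 * S 0 1 = 0) :
    S 0 1 = 0 ∧ S 1 2 = 0 ∧ S 2 3 = 0 ∧ S 3 4 = 0 ∧ S 0 4 = 0 := by
  have hci : ∀ k : Fin 5, S.IsCondIndep k (k + 1) (k + 2) := by
    intro k
    fin_cases k <;>
      simp [Matrix.IsCondIndep, hsymm.apply 0 3, hsymm.apply 0 4, hsymm.apply 1 4] <;> linarith
  have hzero := hpd.apply_add_one_eq_zero_of_isCondIndep (by norm_num) hci
  exact ⟨hzero 0, hzero 1, hzero 2, hzero 3, hsymm.apply 0 4 ▸ hzero 4⟩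
end

section
/- Let Σ be a real symmetric positive definite n×n matrix, K a subset of {1,…,n}, and i, j distinct indices not in K. Then det(Σ_{K∪{i}})·det(Σ_{K∪{j}}) ≥ det(Σ_{K∪{i,j}})·det(Σ_K), where Σ_S denotes the principal submatrix with rows and columns indexed by S. -/
/-- Principal minor of `S` on the index set `T`. -/
def principalMinor {n : ℕ} (S : Matrix (Fin n) (Fin n) ℝ) (T : Finset (Fin n)) : ℝ :=
  (S.submatrix (fun a : T => (a : Fin n)) (fun a : T => (a : Fin n))).det

/-!
Let `A = Σ_K` and let `C = Σ - Σ_{·K} A⁻¹ Σ_{K·}` be the Schur complement of `A`. For every `T`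
disjoint from `K`, `det Σ_{K ∪ T} = det A · det C_T`. Applied to `T = {i}`, `{j}`, `{i, j}` this
gives `det Σ_{K+i} det Σ_{K+j} - det Σ_{K+i+j} det Σ_K = (det A)² C_ij C_ji`, and `C_ij = C_ji`
because `Σ` is symmetric.
-/

open Matrix Finset

namespace Matrix

variable {ι R : Type*} [DecidableEq ι] [CommRing R]

noncomputable def schurComplement (S : Matrix ι ι R) (K : Finset ι) : Matrix ι ι R :=
  S - (S.submatrix id (↑) : Matrix ι K R) * (S.submatrix (↑) (↑) : Matrix K K R)⁻¹ *
    (S.submatrix (↑) id : Matrix K ι R)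

theorem IsSymm.schurComplement {S : Matrix ι ι R} (hS : S.IsSymm) (K : Finset ι) :
    (S.schurComplement K).IsSymm := by
  have hA : (S.submatrix ((↑) : K → ι) (↑)).IsSymm := hS.submatrix _
  refine hS.sub ?_
  rw [IsSymm, transpose_mul, transpose_mul, hA.inv.eq, transpose_submatrix, transpose_submatrix,
    hS.eq, Matrix.mul_assoc]

end Matrix

variable {n : ℕ}

theorem principalMinor_union (S : Matrix (Fin n) (Fin n) ℝ) {K T : Finset (Fin n)}
    (hKT : Disjoint K T) (hK : principalMinor S K ≠ 0) :
    principalMinor S (K ∪ T) = principalMinor S K * principalMinor (S.schurComplement K) T := by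
  let A := S.submatrix ((↑) : K → Fin n) ((↑) : K → Fin n)
  let _ : Invertible A := invertibleOfIsUnitDet A hK.isUnit
  have hblocks : (S.submatrix ((↑) : ↥(K ∪ T) → Fin n) (↑)).submatrix
      (Equiv.Finset.union K T hKT) (Equiv.Finset.union K T hKT) =
      fromBlocks A (S.submatrix (↑) ((↑) : T → Fin n)) (S.submatrix ((↑) : T → Fin n) (↑))
        (S.submatrix ((↑) : T → Fin n) ((↑) : T → Fin n)) := by
    ext (a | a) (b | b) <;> rfl
  rw [principalMinor, ← det_submatrix_equiv_self (Equiv.Finset.union K T hKT), hblocks,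
    det_fromBlocks₁₁, invOf_eq_nonsing_inv]
  rfl

theorem principalMinor_singleton (S : Matrix (Fin n) (Fin n) ℝ) (i : Fin n) :
    principalMinor S {i} = S i i := by
  rw [principalMinor, det_unique]
  rfl

theorem principalMinor_pair (S : Matrix (Fin n) (Fin n) ℝ) {i j : Fin n} (hij : i ≠ j) :
    principalMinor S {i, j} = S i i * S j j - S i j * S j i := by
  let v : Fin 2 → ({i, j} : Finset (Fin n)) := ![⟨i, by simp⟩, ⟨j, by simp⟩]
  have hv : v.Bijective := by
    rw [Fintype.bijective_iff_injective_and_card]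
    refine ⟨?_, by rw [Fintype.card_fin, Fintype.card_coe, card_pair hij]⟩
    intro a b
    fin_cases a <;> fin_cases b <;> simp [v, hij, hij.symm]
  rw [principalMinor, ← det_submatrix_equiv_self (Equiv.ofBijective v hv), det_fin_two]
  rfl

theorem principalMinor_insert_mul_insert (S : Matrix (Fin n) (Fin n) ℝ) {K : Finset (Fin n)}
    {i j : Fin n} (hK : principalMinor S K ≠ 0) (hij : i ≠ j) (hi : i ∉ K) (hj : j ∉ K) :
    principalMinor S (insert i K) * principalMinor S (insert j K) =
      principalMinor S (insert i (insert j K)) * principalMinor S K +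
        principalMinor S K * S.schurComplement K i j *
          (principalMinor S K * S.schurComplement K j i) := by
  have hKij : insert i (insert j K) = K ∪ {i, j} := by rw [union_insert, union_singleton]
  rw [hKij, ← union_singleton, ← union_singleton,
    principalMinor_union S (disjoint_singleton_right.2 hi) hK,
    principalMinor_union S (disjoint_singleton_right.2 hj) hK,
    principalMinor_union S (disjoint_insert_right.2 ⟨hi, disjoint_singleton_right.2 hj⟩) hK,
    principalMinor_singleton, principalMinor_singleton, principalMinor_pair _ hij]
  ring

theorem koteljanskii_general {n : ℕ} (S : Matrix (Fin n) (Fin n) ℝ)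
    (hpd : S.PosDef)
    (K : Finset (Fin n)) (i j : Fin n) (hij : i ≠ j) (hi : i ∉ K) (hj : j ∉ K) :
    principalMinor S (insert i K) * principalMinor S (insert j K) ≥
      principalMinor S (insert i (insert j K)) * principalMinor S K := by
  have hK : principalMinor S K ≠ 0 :=
    ((hpd.submatrix Subtype.val_injective).isUnit.map detMonoidHom).ne_zero
  have hC : S.schurComplement K j i = S.schurComplement K i j :=
    (isHermitian_iff_isSymm.mp hpd.isHermitian).schurComplement K |>.apply i j
  rw [ge_iff_le, principalMinor_insert_mul_insert S hK hij hi hj, hC]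
  exact le_add_of_nonneg_right (mul_self_nonneg _)

theorem koteljanskii {n : ℕ} (S : Matrix (Fin n) (Fin n) ℝ)
    (hsymm : S.IsSymm) (hpd : S.PosDef)
    (K : Finset (Fin n)) (i j : Fin n) (hij : i ≠ j) (hi : i ∉ K) (hj : j ∉ K) :
    principalMinor S (insert i K) * principalMinor S (insert j K) ≥
      principalMinor S (insert i (insert j K)) * principalMinor S K :=
  koteljanskii_general S hpd K i j hij hi hj
end

section
/- Let A, B, C be n×n matrices that are the slices of a tensor of rank ≤ n, i.e., A = Σ_{s=1}^{n} x_s u_s v_sᵀ, B = Σ_{s=1}^{n} y_s u_s v_sᵀ, C = Σ_{s=1}^{n} z_s u_s v_sᵀ for vectors u_s, v_s ∈ ℂⁿ and scalars x_s, y_s, z_s. If B is invertible, then A·B⁻¹·C = C·B⁻¹·A. -/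
open Matrix

lemma sum_smul_vecMulVec_eq {n : ℕ} (u v : Fin n → (Fin n → ℂ)) (x : Fin n → ℂ) :
    (∑ s : Fin n, x s • Matrix.vecMulVec (u s) (v s)) =
      (Matrix.of fun i s => u s i) * Matrix.diagonal x * (Matrix.of fun s j => v s j) := by
  ext i j
  simp only [Matrix.sum_apply, Matrix.smul_apply, Matrix.vecMulVec_apply, smul_eq_mul,
    Matrix.mul_apply, Matrix.diagonal_apply, Matrix.of_apply, mul_ite, mul_zero, ite_mul,
    zero_mul, Finset.sum_ite_eq, Finset.sum_ite_eq', Finset.mem_univ, if_true]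
  apply Finset.sum_congr rfl
  intro s _
  ring

theorem slice_commutation {n : ℕ} (u v : Fin n → (Fin n → ℂ)) (x y z : Fin n → ℂ)
    (A B C : Matrix (Fin n) (Fin n) ℂ)
    (hA : A = ∑ s : Fin n, x s • Matrix.vecMulVec (u s) (v s))
    (hB : B = ∑ s : Fin n, y s • Matrix.vecMulVec (u s) (v s))
    (hC : C = ∑ s : Fin n, z s • Matrix.vecMulVec (u s) (v s))
    (hBinv : IsUnit B.det) :
    A * B⁻¹ * C = C * B⁻¹ * A := by
  set U : Matrix (Fin n) (Fin n) ℂ := Matrix.of fun i s => u s i with hU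
  set V : Matrix (Fin n) (Fin n) ℂ := Matrix.of fun s j => v s j with hV
  rw [sum_smul_vecMulVec_eq] at hA hB hC
  have hdet : IsUnit U.det ∧ IsUnit (Matrix.diagonal y).det ∧ IsUnit V.det := by
    rw [hB, Matrix.det_mul, Matrix.det_mul] at hBinv
    exact ⟨(isUnit_of_mul_isUnit_left (isUnit_of_mul_isUnit_left hBinv)),
      isUnit_of_mul_isUnit_right (isUnit_of_mul_isUnit_left hBinv),
      isUnit_of_mul_isUnit_right hBinv⟩
  obtain ⟨hUdet, hDdet, hVdet⟩ := hdet
  have hBinv' : B⁻¹ = V⁻¹ * (Matrix.diagonal y)⁻¹ * U⁻¹ := by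
    rw [hB, Matrix.mul_inv_rev, Matrix.mul_inv_rev, ← Matrix.mul_assoc]
  have key : ∀ a b : Fin n → ℂ,
      U * Matrix.diagonal a * V * (V⁻¹ * (Matrix.diagonal y)⁻¹ * U⁻¹) *
        (U * Matrix.diagonal b * V) =
      U * (Matrix.diagonal a * (Matrix.diagonal y)⁻¹ * Matrix.diagonal b) * V := by
    intro a b
    simp only [Matrix.mul_assoc]
    rw [Matrix.mul_nonsing_inv_cancel_left _ _ hVdet,
      Matrix.nonsing_inv_mul_cancel_left _ _ hUdet]
  have hy : (Matrix.diagonal y)⁻¹ = Matrix.diagonal (Ring.inverse y) :=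
    Matrix.inv_diagonal y
  have hfun : (fun i => x i * Ring.inverse y i * z i) = fun i => z i * Ring.inverse y i * x i := by
    funext i; ring
  rw [hA, hC, hBinv', key, key, hy]
  simp only [Matrix.diagonal_mul_diagonal, hfun]
end

section
/- For a general plane quadric in the form p₁² = λ·p₀·p₂ with λ = 4, the maximum likelihood estimator is a rational function of the data: for generic positive data (u₀,u₁,u₂), the system consisting of p₁² − 4p₀p₂ = 0 and the critical equations of the likelihood function p₀^{u₀}p₁^{u₁}p₂^{u₂}/(p₀+p₁+p₂)^{u₀+u₁+u₂} on this curve has exactly one solution with p₀p₁p₂(p₀+p₁+p₂) ≠ 0 (up to scaling), namely ((2u₀+u₁)² : 2(2u₀+u₁)(u₁+2u₂) : (u₁+2u₂)²). -/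
/-!
The critical determinant equals `p₁² · L(p) + (…) · (p₁² − 4 p₀ p₂)` with `L` linear in `p`, so
away from `p₁ = 0` the critical points are the points of the conic `p₁² = 4 p₀ p₂` on the line
`L = 0`. Combining `L = 0` with the conic equation once more, and cancelling the
factor `p₀ + p₁ + p₂`, gives the two linear relations `2 b p₀ = a p₁` and `2 a p₂ = b p₁`
with `a = 2u₀ + u₁`, `b = u₁ + 2u₂`, which pin down `p` up to scaling as `(a² : 2ab : b²)`.
-/

section CommRing

variable {R : Type*} [CommRing R] (u0 u1 u2 : R)

/-- Its columns are `u`, `p` and `(pᵢ ∂F/∂pᵢ)ᵢ` for `F = p₁² − 4 p₀ p₂`. -/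
def hwCritMatrix (p : Fin 3 → R) : Matrix (Fin 3) (Fin 3) R :=
  Matrix.of ![![u0, p 0, p 0 * (-4 * p 2)],
              ![u1, p 1, p 1 * (2 * p 1)],
              ![u2, p 2, p 2 * (-4 * p 0)]]

def IsHWCritical (p : Fin 3 → R) : Prop :=
  p 1 ^ 2 - 4 * p 0 * p 2 = 0 ∧ (hwCritMatrix u0 u1 u2 p).det = 0 ∧
    p 0 * p 1 * p 2 * (p 0 + p 1 + p 2) ≠ 0

def hwPoint (a b : R) : Fin 3 → R := ![a ^ 2, 2 * a * b, b ^ 2]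

theorem det_hwCritMatrix (p : Fin 3 → R) :
    (hwCritMatrix u0 u1 u2 p).det =
      p 1 ^ 2 * ((u1 + 2 * u2) * p 0 - (2 * u0 + u1) * p 2 + (u2 - u0) * p 1) +
        (u1 * p 2 - u2 * p 1 + u0 * p 1 - u1 * p 0) * (p 1 ^ 2 - 4 * p 0 * p 2) := by
  rw [hwCritMatrix, Matrix.det_fin_three]
  simp only [Matrix.of_apply, Matrix.cons_val', Matrix.cons_val_zero, Matrix.cons_val_one,
    Matrix.cons_val_two, Matrix.head_cons, Matrix.tail_cons, Matrix.empty_val',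
    Matrix.cons_val_fin_one, Matrix.head_fin_const]
  ring

theorem IsHWCritical.linear_relations [IsDomain R] {p : Fin 3 → R}
    (hp : IsHWCritical u0 u1 u2 p) :
    2 * (u1 + 2 * u2) * p 0 = (2 * u0 + u1) * p 1 ∧
      2 * (2 * u0 + u1) * p 2 = (u1 + 2 * u2) * p 1 := by
  obtain ⟨hF, hdet, hne⟩ := hp
  have hp1 : p 1 ≠ 0 := fun h => hne (by rw [h]; ring)
  have hsum : p 0 + p 1 + p 2 ≠ 0 := fun h => hne (by rw [h]; ring)
  have hL : (u1 + 2 * u2) * p 0 - (2 * u0 + u1) * p 2 + (u2 - u0) * p 1 = 0 := by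
    rw [det_hwCritMatrix, hF, mul_zero, add_zero] at hdet
    exact (mul_eq_zero.mp hdet).resolve_left (pow_ne_zero 2 hp1)
  constructor
  · refine sub_eq_zero.mp ((mul_eq_zero.mp ?_).resolve_right hsum)
    linear_combination (-(u0 + u1 + u2)) * hF + (2 * p 0 + p 1) * hL
  · refine sub_eq_zero.mp ((mul_eq_zero.mp ?_).resolve_right hsum)
    linear_combination (-(u0 + u1 + u2)) * hF - (2 * p 2 + p 1) * hL

end CommRing

section Field

variable {K : Type*} [Field K] {u0 u1 u2 : K}

theorem isHWCritical_hwPoint (h2 : (2 : K) ≠ 0) (ha : 2 * u0 + u1 ≠ 0) (hb : u1 + 2 * u2 ≠ 0)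
    (hs : u0 + u1 + u2 ≠ 0) :
    IsHWCritical u0 u1 u2 (hwPoint (2 * u0 + u1) (u1 + 2 * u2)) := by
  set a := 2 * u0 + u1
  set b := u1 + 2 * u2
  have hab : a + b ≠ 0 := by
    have : a + b = 2 * (u0 + u1 + u2) := by ring
    rw [this]
    exact mul_ne_zero h2 hs
  simp only [IsHWCritical, det_hwCritMatrix, hwPoint, Matrix.cons_val_zero, Matrix.cons_val_one,
    Matrix.cons_val_two, Matrix.head_cons, Matrix.tail_cons]
  refine ⟨by ring, by ring, ?_⟩
  have : a ^ 2 * (2 * a * b) * b ^ 2 * (a ^ 2 + 2 * a * b + b ^ 2) =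
      2 * a ^ 3 * b ^ 3 * (a + b) ^ 2 := by ring
  rw [this]
  exact mul_ne_zero (mul_ne_zero (mul_ne_zero h2 (pow_ne_zero 3 ha)) (pow_ne_zero 3 hb))
    (pow_ne_zero 2 hab)

theorem eq_smul_hwPoint_of_linear_relations {a b : K} {p : Fin 3 → K} (h2 : (2 : K) ≠ 0)
    (ha : a ≠ 0) (hb : b ≠ 0) (hp0 : 2 * b * p 0 = a * p 1) (hp2 : 2 * a * p 2 = b * p 1) :
    p = (p 1 / (2 * a * b)) • hwPoint a b := by
  ext i
  fin_cases i <;>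
    simp only [hwPoint, Pi.smul_apply, smul_eq_mul, Fin.zero_eta, Fin.mk_one, Fin.reduceFinMk,
      Matrix.cons_val_zero, Matrix.cons_val_one, Matrix.cons_val_two, Matrix.head_cons,
      Matrix.tail_cons] <;>
    field_simp
  · linear_combination hp0
  · linear_combination hp2

theorem IsHWCritical.exists_eq_smul_hwPoint (h2 : (2 : K) ≠ 0) (ha : 2 * u0 + u1 ≠ 0)
    (hb : u1 + 2 * u2 ≠ 0) {p : Fin 3 → K} (hp : IsHWCritical u0 u1 u2 p) :
    ∃ c : K, c ≠ 0 ∧ p = c • hwPoint (2 * u0 + u1) (u1 + 2 * u2) := by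
  have hp1 : p 1 ≠ 0 := fun h => hp.2.2 (by rw [h]; ring)
  obtain ⟨hp0, hp2⟩ := hp.linear_relations
  exact ⟨_, div_ne_zero hp1 (mul_ne_zero (mul_ne_zero h2 ha) hb),
    eq_smul_hwPoint_of_linear_relations h2 ha hb hp0 hp2⟩

end Field

theorem hardy_weinberg_ml_degree_one (u0 u1 u2 : ℝ)
    (h0 : 0 < u0) (h1 : 0 < u1) (h2 : 0 < u2) :
    let q : Fin 3 → ℂ := ![((2 * u0 + u1 : ℝ) : ℂ) ^ 2,
      2 * ((2 * u0 + u1 : ℝ) : ℂ) * ((u1 + 2 * u2 : ℝ) : ℂ), ((u1 + 2 * u2 : ℝ) : ℂ) ^ 2]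
    let crit : (Fin 3 → ℂ) → Prop := fun p =>
      p 1 ^ 2 - 4 * p 0 * p 2 = 0 ∧
      (Matrix.of ![![((u0 : ℝ) : ℂ), p 0, p 0 * (-4 * p 2)],
                   ![((u1 : ℝ) : ℂ), p 1, p 1 * (2 * p 1)],
                   ![((u2 : ℝ) : ℂ), p 2, p 2 * (-4 * p 0)]]).det = 0 ∧
      p 0 * p 1 * p 2 * (p 0 + p 1 + p 2) ≠ 0
    crit q ∧ ∀ p : Fin 3 → ℂ, crit p → ∃ c : ℂ, c ≠ 0 ∧ p = c • q := by
  intro q crit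
  have hq : q = hwPoint (2 * (u0 : ℂ) + u1) (u1 + 2 * u2) := by
    simp only [q, hwPoint]
    push_cast
    rfl
  have ha : 2 * (u0 : ℂ) + u1 ≠ 0 := by exact_mod_cast (by positivity : 2 * u0 + u1 ≠ 0)
  have hb : (u1 : ℂ) + 2 * u2 ≠ 0 := by exact_mod_cast (by positivity : u1 + 2 * u2 ≠ 0)
  have hs : (u0 : ℂ) + u1 + u2 ≠ 0 := by exact_mod_cast (by positivity : u0 + u1 + u2 ≠ 0)
  change IsHWCritical (u0 : ℂ) u1 u2 q ∧ ∀ p, IsHWCritical (u0 : ℂ) u1 u2 p → _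
  rw [hq]
  exact ⟨isHWCritical_hwPoint two_ne_zero ha hb hs,
    fun p hp => hp.exists_eq_smul_hwPoint two_ne_zero ha hb⟩
end

section
/- The Strassen invariant vanishes on tensors of rank at most 3: if A, B, C are 3×3 complex matrices of the form A = Σ_{s=1}^{3} x_s u_s v_sᵀ, B = Σ_{s=1}^{3} y_s u_s v_sᵀ, C = Σ_{s=1}^{3} z_s u_s v_sᵀ, then det(A·adj(B)·C − C·adj(B)·A) = 0. -/
/-!
Writing `U` for the matrix with columns `u s` and `V` for the one with rows `v s`, the three
slices are `U X V`, `U Y V`, `U Z V` with `X, Y, Z` diagonal. Since `adj` is multiplicative and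
`V * adj V = det V • 1`, `adj U * U = det U • 1`, both products `A * adj B * C` and
`C * adj B * A` equal `det U * det V • U (X adj Y Z) V`, and diagonal matrices commute.
So the commutator is already zero.
-/

namespace Matrix

variable {n R : Type*} [Fintype n] [DecidableEq n] [CommRing R]

theorem sum_smul_vecMulVec_eq_mul_diagonal_mul (u v : n → n → R) (x : n → R) :
    ∑ s, x s • vecMulVec (u s) (v s) = (of u)ᵀ * diagonal x * of v := by
  ext i j
  simp only [sum_apply, smul_apply, vecMulVec_apply, mul_apply, diagonal_apply, transpose_apply,
    of_apply, smul_eq_mul, mul_ite, mul_zero, Finset.sum_ite_eq', Finset.mem_univ, if_true]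
  exact Finset.sum_congr rfl fun s _ => by ring

theorem mul_adjugate_mul_comm_of_diagonal (P Q : Matrix n n R) (x y z : n → R) :
    P * diagonal x * Q * adjugate (P * diagonal y * Q) * (P * diagonal z * Q) =
      P * diagonal z * Q * adjugate (P * diagonal y * Q) * (P * diagonal x * Q) := by
  have hsandwich (a c : n → R) :
      P * diagonal a * Q * adjugate (P * diagonal y * Q) * (P * diagonal c * Q) =
        (P.det * Q.det) • (P * (diagonal a * adjugate (diagonal y) * diagonal c) * Q) := by
    rw [adjugate_mul_distrib, adjugate_mul_distrib]
    calc _ = P * diagonal a * (Q * adjugate Q) * adjugate (diagonal y) * (adjugate P * P) *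
              diagonal c * Q := by simp only [Matrix.mul_assoc]
      _ = _ := by
          rw [mul_adjugate, adjugate_mul]
          simp only [Matrix.mul_smul, Matrix.smul_mul, Matrix.mul_one, smul_smul, Matrix.mul_assoc]
  have hdiag : diagonal x * adjugate (diagonal y) * diagonal z =
      diagonal z * adjugate (diagonal y) * diagonal x := by
    simp only [adjugate_diagonal, diagonal_mul_diagonal]
    congr 1
    ext i
    ring
  rw [hsandwich, hsandwich, hdiag]

end Matrix

theorem strassen_vanishes_on_rank_three (u v : Fin 3 → (Fin 3 → ℂ)) (x y z : Fin 3 → ℂ)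
    (A B C : Matrix (Fin 3) (Fin 3) ℂ)
    (hA : A = ∑ s : Fin 3, x s • Matrix.vecMulVec (u s) (v s))
    (hB : B = ∑ s : Fin 3, y s • Matrix.vecMulVec (u s) (v s))
    (hC : C = ∑ s : Fin 3, z s • Matrix.vecMulVec (u s) (v s)) :
    (A * B.adjugate * C - C * B.adjugate * A).det = 0 := by
  simp only [hA, hB, hC, Matrix.sum_smul_vecMulVec_eq_mul_diagonal_mul]
  rw [Matrix.mul_adjugate_mul_comm_of_diagonal, sub_self, Matrix.det_zero]
end
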